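/- In the enveloping algebra U(L³ᴰ) with generators χ₁, χ₂, χ₃ and relations χ₃χ₁ = -8h²χ₂χ₁ + 4hχ₂χ₃ + χ₁χ₃ - 4hχ₁ + 2χ₃, χ₃χ₂ = -2hχ₂χ₁ + χ₂χ₃ - χ₁, χ₁χ₂ = 4hχ₂² + χ₂χ₁ + 2χ₂, the set of ordered monomials {χ₂^α χ₁^β χ₃^γ : α,β,γ ∈ ℤ≥0} is a linear basis. -/

import Mathlib

noncomputable section PBWRep

abbrev Mod3 := (ℕ × ℕ × ℕ) →₀ ℂ

def ee (p : ℕ × ℕ × ℕ) : Mod3 := Finsupp.single p 1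

def B2 : Mod3 →ₗ[ℂ] Mod3 :=
  Finsupp.lift Mod3 ℂ _ (fun p => ee (p.1 + 1, p.2.1, p.2.2))

def B1 (h : ℂ) : Mod3 →ₗ[ℂ] Mod3 :=
  Finsupp.lift Mod3 ℂ _ (fun p =>
    ee (p.1, p.2.1 + 1, p.2.2) + (4 * h * p.1) • ee (p.1 + 1, p.2.1, p.2.2)
      + (2 * (p.1 : ℂ)) • ee p)

def f3 (h : ℂ) : ℕ → ℕ → ℕ → Mod3
  | 0, 0, c => ee (0, 0, c + 1)
  | 0, b + 1, c =>
      (-8 * h ^ 2) • B2 (B1 h (ee (0, b, c))) + (4 * h) • B2 (f3 h 0 b c)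
        + B1 h (f3 h 0 b c) - (4 * h) • B1 h (ee (0, b, c)) + (2 : ℂ) • f3 h 0 b c
  | a + 1, b, c =>
      (-2 * h) • B2 (B1 h (ee (a, b, c))) + B2 (f3 h a b c) - B1 h (ee (a, b, c))

def B3 (h : ℂ) : Mod3 →ₗ[ℂ] Mod3 :=
  Finsupp.lift Mod3 ℂ _ (fun p => f3 h p.1 p.2.1 p.2.2)

lemma lift_ee (f : ℕ × ℕ × ℕ → Mod3) (p : ℕ × ℕ × ℕ) :
    Finsupp.lift Mod3 ℂ _ f (ee p) = f p := by
  simp [ee, Finsupp.lift_apply, Finsupp.sum_single_index]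

@[simp] lemma B2_ee (p : ℕ × ℕ × ℕ) : B2 (ee p) = ee (p.1 + 1, p.2.1, p.2.2) :=
  lift_ee _ p

@[simp] lemma B1_ee (h : ℂ) (p : ℕ × ℕ × ℕ) :
    B1 h (ee p) = ee (p.1, p.2.1 + 1, p.2.2) + (4 * h * p.1) • ee (p.1 + 1, p.2.1, p.2.2)
      + (2 * (p.1 : ℂ)) • ee p :=
  lift_ee _ p

@[simp] lemma B3_ee (h : ℂ) (p : ℕ × ℕ × ℕ) : B3 h (ee p) = f3 h p.1 p.2.1 p.2.2 :=
  lift_ee _ p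

/-- extensionality on the `ee` basis -/
lemma end_ext {f g : Mod3 →ₗ[ℂ] Mod3} (H : ∀ p, f (ee p) = g (ee p)) : f = g := by
  apply Finsupp.lhom_ext
  intro p b
  have hb : (Finsupp.single p b : Mod3) = b • ee p := by
    simp [ee, Finsupp.smul_single]
  rw [hb, map_smul, map_smul, H]

lemma comm12 (h : ℂ) (v : Mod3) :
    B1 h (B2 v) = B2 (B1 h v) + (4 * h) • B2 (B2 v) + (2 : ℂ) • B2 v := by
  have : (B1 h).comp B2 = B2.comp (B1 h) + (4 * h) • B2.comp B2 + (2 : ℂ) • B2 := by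
    apply end_ext
    intro p
    simp only [LinearMap.comp_apply, LinearMap.add_apply, LinearMap.smul_apply,
      B2_ee, B1_ee, map_add, map_smul]
    push_cast
    module
  simpa [LinearMap.comp_apply] using congrFun (congrArg DFunLike.coe this) v



lemma key31 (h : ℂ) (a b c : ℕ) :
    f3 h a (b + 1) c + (4 * h * a) • f3 h (a + 1) b c + (2 * (a : ℂ)) • f3 h a b c
      = (-8 * h ^ 2) • B2 (B1 h (ee (a, b, c))) + (4 * h) • B2 (f3 h a b c)
        + B1 h (f3 h a b c) - (4 * h) • B1 h (ee (a, b, c)) + (2 : ℂ) • f3 h a b c := by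
  induction a with
  | zero => simp [f3]
  | succ a ih =>
    have hf1 : f3 h (a + 1) b c
        = (-2 * h) • B2 (B1 h (ee (a, b, c))) + B2 (f3 h a b c) - B1 h (ee (a, b, c)) := by
      simp only [f3]
    have hf2 : f3 h (a + 1 + 1) b c
        = (-2 * h) • B2 (B1 h (ee (a + 1, b, c))) + B2 (f3 h (a + 1) b c)
          - B1 h (ee (a + 1, b, c)) := by
      simp only [f3]
    have hf3 : f3 h (a + 1) (b + 1) c
        = (-2 * h) • B2 (B1 h (ee (a, b + 1, c))) + B2 (f3 h a (b + 1) c)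
          - B1 h (ee (a, b + 1, c)) := by
      simp only [f3]
    have hG : f3 h a (b + 1) c
        = (-8 * h ^ 2) • B2 (B1 h (ee (a, b, c))) + (4 * h) • B2 (f3 h a b c)
          + B1 h (f3 h a b c) - (4 * h) • B1 h (ee (a, b, c)) + (2 : ℂ) • f3 h a b c
          - (4 * h * a) • f3 h (a + 1) b c - (2 * (a : ℂ)) • f3 h a b c := by
      rw [← ih]; module
    rw [hf3, hG, hf2, hf1]
    simp only [comm12 h, map_add, map_sub, map_smul, B2_ee, B1_ee]
    push_cast
    module


end PBWRep

/-- Abbreviations for the generators `χ₁, χ₂, χ₃`. -/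
noncomputable def G1 : FreeAlgebra ℂ (Fin 3) := FreeAlgebra.ι ℂ 0
noncomputable def G2 : FreeAlgebra ℂ (Fin 3) := FreeAlgebra.ι ℂ 1
noncomputable def G3 : FreeAlgebra ℂ (Fin 3) := FreeAlgebra.ι ℂ 2

/-- The defining relations of the enveloping algebra `U(L³ᴰ)`. -/
inductive URel (h : ℂ) : FreeAlgebra ℂ (Fin 3) → FreeAlgebra ℂ (Fin 3) → Prop
  | r31 : URel h (G3 * G1)
      ((-8 * h ^ 2) • (G2 * G1) + (4 * h) • (G2 * G3) + G1 * G3 - (4 * h) • G1 + (2 : ℂ) • G3)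
  | r32 : URel h (G3 * G2) ((-2 * h) • (G2 * G1) + G2 * G3 - G1)
  | r12 : URel h (G1 * G2) ((4 * h) • (G2 * G2) + G2 * G1 + (2 : ℂ) • G2)

/-- The enveloping algebra `U(L³ᴰ)` of the 3-dimensional Jordanian quantum Lie algebra. -/
abbrev UL3D (h : ℂ) := RingQuot (URel h)

noncomputable def uχ1 (h : ℂ) : UL3D h := RingQuot.mkAlgHom ℂ (URel h) G1
noncomputable def uχ2 (h : ℂ) : UL3D h := RingQuot.mkAlgHom ℂ (URel h) G2
noncomputable def uχ3 (h : ℂ) : UL3D h := RingQuot.mkAlgHom ℂ (URel h) G3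


noncomputable section PBWAux

noncomputable def Frep (h : ℂ) : FreeAlgebra ℂ (Fin 3) →ₐ[ℂ] Module.End ℂ Mod3 :=
  FreeAlgebra.lift ℂ (![B1 h, B2, B3 h])

@[simp] lemma Frep_G1 (h : ℂ) : Frep h G1 = B1 h := by
  simp [Frep, G1, FreeAlgebra.lift_ι_apply]
@[simp] lemma Frep_G2 (h : ℂ) : Frep h G2 = B2 := by
  simp [Frep, G2, FreeAlgebra.lift_ι_apply]
@[simp] lemma Frep_G3 (h : ℂ) : Frep h G3 = B3 h := by
  simp [Frep, G3, FreeAlgebra.lift_ι_apply]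

lemma Frep_rel (h : ℂ) : ∀ ⦃x y : FreeAlgebra ℂ (Fin 3)⦄, URel h x y → Frep h x = Frep h y := by
  intro x y r
  induction r with
  | r31 =>
    simp only [map_add, map_sub, map_smul, map_mul, Frep_G1, Frep_G2, Frep_G3]
    apply end_ext
    intro p
    simp only [LinearMap.add_apply, LinearMap.sub_apply, LinearMap.smul_apply,
      Module.End.mul_apply]
    have k := key31 h p.1 p.2.1 p.2.2
    simp only [B1_ee, B2_ee, B3_ee, map_add, map_smul] at k ⊢
    linear_combination (norm := module) k
  | r32 =>
    simp only [map_add, map_sub, map_smul, map_mul, Frep_G1, Frep_G2, Frep_G3]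
    apply end_ext
    intro p
    simp only [LinearMap.add_apply, LinearMap.sub_apply, LinearMap.smul_apply,
      Module.End.mul_apply, B2_ee, B3_ee]
    show f3 h (p.1 + 1) p.2.1 p.2.2 = _
    simp only [f3]
  | r12 =>
    simp only [map_add, map_smul, map_mul, Frep_G1, Frep_G2, Frep_G3]
    apply end_ext
    intro p
    simp only [LinearMap.add_apply, LinearMap.smul_apply, Module.End.mul_apply,
      map_add, map_smul, B2_ee, B1_ee]
    push_cast
    module

noncomputable def Phi (h : ℂ) : UL3D h →ₐ[ℂ] Module.End ℂ Mod3 :=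
  RingQuot.liftAlgHom ℂ ⟨Frep h, Frep_rel h⟩

@[simp] lemma Phi_u1 (h : ℂ) : Phi h (uχ1 h) = B1 h := by
  simp [Phi, uχ1, RingQuot.liftAlgHom_mkAlgHom_apply]
@[simp] lemma Phi_u2 (h : ℂ) : Phi h (uχ2 h) = B2 := by
  simp [Phi, uχ2, RingQuot.liftAlgHom_mkAlgHom_apply]
@[simp] lemma Phi_u3 (h : ℂ) : Phi h (uχ3 h) = B3 h := by
  simp [Phi, uχ3, RingQuot.liftAlgHom_mkAlgHom_apply]

lemma B3_pow (h : ℂ) (c : ℕ) : (B3 h ^ c) (ee (0, 0, 0)) = ee (0, 0, c) := by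
  induction c with
  | zero => simp
  | succ c ih => rw [pow_succ', Module.End.mul_apply, ih]; simp [f3]

lemma B1_pow (h : ℂ) (b c : ℕ) : (B1 h ^ b) (ee (0, 0, c)) = ee (0, b, c) := by
  induction b with
  | zero => simp
  | succ b ih => rw [pow_succ', Module.End.mul_apply, ih]; simp

lemma B2_pow (a b c : ℕ) : (B2 ^ a) (ee (0, b, c)) = ee (a, b, c) := by
  induction a with
  | zero => simp
  | succ a ih => rw [pow_succ', Module.End.mul_apply, ih]; simp

def ev : (Mod3 →ₗ[ℂ] Mod3) →ₗ[ℂ] Mod3 where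
  toFun f := f (ee (0, 0, 0))
  map_add' f g := rfl
  map_smul' c f := rfl

lemma indep (h : ℂ) :
    LinearIndependent ℂ (fun p : ℕ × ℕ × ℕ =>
      uχ2 h ^ p.1 * uχ1 h ^ p.2.1 * uχ3 h ^ p.2.2) := by
  apply LinearIndependent.of_comp (ev.comp (AlgHom.toLinearMap (Phi h)))
  have : (⇑(ev.comp (AlgHom.toLinearMap (Phi h))) ∘ fun p : ℕ × ℕ × ℕ =>
      uχ2 h ^ p.1 * uχ1 h ^ p.2.1 * uχ3 h ^ p.2.2) = fun p => Finsupp.single p (1 : ℂ) := by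
    funext p
    simp only [Function.comp_apply, LinearMap.comp_apply, AlgHom.toLinearMap_apply,
      map_mul, map_pow, Phi_u1, Phi_u2, Phi_u3]
    show ((B2 ^ p.1 * B1 h ^ p.2.1 * B3 h ^ p.2.2)) (ee (0, 0, 0)) = _
    rw [Module.End.mul_apply, Module.End.mul_apply, B3_pow, B1_pow, B2_pow]
    rfl
  rw [this]
  exact Finsupp.basisSingleOne.linearIndependent

section Span
variable (h : ℂ)

noncomputable def mono (a b c : ℕ) : UL3D h := uχ2 h ^ a * uχ1 h ^ b * uχ3 h ^ c

noncomputable def SS : Submodule ℂ (UL3D h) :=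
  Submodule.span ℂ (Set.range (fun p : ℕ × ℕ × ℕ =>
    uχ2 h ^ p.1 * uχ1 h ^ p.2.1 * uχ3 h ^ p.2.2))

lemma mono_mem (a b c : ℕ) : mono h a b c ∈ SS h :=
  Submodule.subset_span ⟨(a, b, c), rfl⟩

lemma rel12 : uχ1 h * uχ2 h
    = (4 * h) • (uχ2 h * uχ2 h) + uχ2 h * uχ1 h + (2 : ℂ) • uχ2 h := by
  have := RingQuot.mkAlgHom_rel ℂ (URel.r12 (h := h))
  simpa only [map_mul, map_add, map_smul, uχ1, uχ2] using this

lemma rel32 : uχ3 h * uχ2 h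
    = (-2 * h) • (uχ2 h * uχ1 h) + uχ2 h * uχ3 h - uχ1 h := by
  have := RingQuot.mkAlgHom_rel ℂ (URel.r32 (h := h))
  simpa only [map_mul, map_add, map_sub, map_smul, uχ1, uχ2, uχ3] using this

lemma rel31 : uχ3 h * uχ1 h
    = (-8 * h ^ 2) • (uχ2 h * uχ1 h) + (4 * h) • (uχ2 h * uχ3 h) + uχ1 h * uχ3 h
      - (4 * h) • uχ1 h + (2 : ℂ) • uχ3 h := by
  have := RingQuot.mkAlgHom_rel ℂ (URel.r31 (h := h))
  simpa only [map_mul, map_add, map_sub, map_smul, uχ1, uχ2, uχ3] using this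

lemma mul2_mono (a b c : ℕ) : uχ2 h * mono h a b c = mono h (a + 1) b c := by
  simp [mono, pow_succ', mul_assoc]

lemma l2S : ∀ v ∈ SS h, uχ2 h * v ∈ SS h := by
  intro v hv
  have : SS h ≤ Submodule.comap (LinearMap.mulLeft ℂ (uχ2 h)) (SS h) := by
    rw [SS, Submodule.span_le]
    rintro _ ⟨p, rfl⟩
    have : uχ2 h * (uχ2 h ^ p.1 * uχ1 h ^ p.2.1 * uχ3 h ^ p.2.2) = mono h (p.1 + 1) p.2.1 p.2.2 :=
      mul2_mono h p.1 p.2.1 p.2.2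
    simpa [this, SS] using mono_mem h (p.1 + 1) p.2.1 p.2.2
  simpa using this hv

lemma mul1_mono0 (b c : ℕ) : uχ1 h * mono h 0 b c = mono h 0 (b + 1) c := by
  simp [mono, pow_succ', mul_assoc]

lemma l1_mono : ∀ a b c, uχ1 h * mono h a b c ∈ SS h := by
  intro a
  induction a with
  | zero =>
    intro b c
    rw [mul1_mono0]
    exact mono_mem h 0 (b + 1) c
  | succ a ih =>
    intro b c
    rw [← mul2_mono, ← mul_assoc, rel12, add_mul, add_mul, smul_mul_assoc, smul_mul_assoc,
      mul_assoc, mul_assoc]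
    exact add_mem (add_mem (Submodule.smul_mem _ _ (l2S h _ (l2S h _ (mono_mem h a b c))))
      (l2S h _ (ih b c))) (Submodule.smul_mem _ _ (l2S h _ (mono_mem h a b c)))

lemma l1S : ∀ v ∈ SS h, uχ1 h * v ∈ SS h := by
  intro v hv
  have : SS h ≤ Submodule.comap (LinearMap.mulLeft ℂ (uχ1 h)) (SS h) := by
    rw [SS, Submodule.span_le]
    rintro _ ⟨p, rfl⟩
    simpa [SS, mono] using l1_mono h p.1 p.2.1 p.2.2
  simpa using this hv

lemma l3_mono : ∀ a b c, uχ3 h * mono h a b c ∈ SS h := by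
  intro a
  induction a with
  | zero =>
    intro b
    induction b with
    | zero =>
      intro c
      have : uχ3 h * mono h 0 0 c = mono h 0 0 (c + 1) := by
        simp [mono, pow_succ', mul_assoc]
      rw [this]; exact mono_mem h 0 0 (c + 1)
    | succ b ihb =>
      intro c
      rw [← mul1_mono0, ← mul_assoc, rel31]
      simp only [add_mul, sub_mul, smul_mul_assoc, mul_assoc]
      refine add_mem (sub_mem (add_mem (add_mem ?_ ?_) ?_) ?_) ?_
      · exact Submodule.smul_mem _ _ (l2S h _ (l1_mono h 0 b c))
      · exact Submodule.smul_mem _ _ (l2S h _ (ihb c))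
      · exact l1S h _ (ihb c)
      · exact Submodule.smul_mem _ _ (l1_mono h 0 b c)
      · exact Submodule.smul_mem _ _ (ihb c)
  | succ a ih =>
    intro b c
    rw [← mul2_mono, ← mul_assoc, rel32, sub_mul, add_mul, smul_mul_assoc,
      mul_assoc, mul_assoc]
    exact sub_mem (add_mem (Submodule.smul_mem _ _ (l2S h _ (l1_mono h a b c)))
      (l2S h _ (ih b c))) (l1_mono h a b c)

lemma l3S : ∀ v ∈ SS h, uχ3 h * v ∈ SS h := by
  intro v hv
  have : SS h ≤ Submodule.comap (LinearMap.mulLeft ℂ (uχ3 h)) (SS h) := by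
    rw [SS, Submodule.span_le]
    rintro _ ⟨p, rfl⟩
    simpa [SS, mono] using l3_mono h p.1 p.2.1 p.2.2
  simpa using this hv

noncomputable def TT : Subalgebra ℂ (UL3D h) where
  carrier := {x | ∀ v ∈ SS h, x * v ∈ SS h}
  mul_mem' := by
    intro a b ha hb v hv
    rw [mul_assoc]
    exact ha _ (hb _ hv)
  add_mem' := by
    intro a b ha hb v hv
    rw [add_mul]
    exact add_mem (ha _ hv) (hb _ hv)
  algebraMap_mem' := by
    intro r v hv
    rw [← Algebra.smul_def]
    exact Submodule.smul_mem _ _ hv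

set_option maxHeartbeats 1000000 in
lemma top_le_TT : (⊤ : Subalgebra ℂ (UL3D h)) ≤ TT h := by
  have h1 : Algebra.adjoin ℂ (Set.range (FreeAlgebra.ι ℂ (X := Fin 3))) = ⊤ :=
    FreeAlgebra.adjoin_range_ι ℂ (Fin 3)
  have h2 : Subalgebra.map (RingQuot.mkAlgHom ℂ (URel h))
      (Algebra.adjoin ℂ (Set.range (FreeAlgebra.ι ℂ (X := Fin 3)))) = ⊤ := by
    rw [h1]
    rw [Algebra.map_top]
    exact (AlgHom.range_eq_top _).mpr (RingQuot.mkAlgHom_surjective ℂ (URel h))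
  rw [AlgHom.map_adjoin] at h2
  rw [← h2]
  apply Algebra.adjoin_le
  rintro _ ⟨_, ⟨i, rfl⟩, rfl⟩
  fin_cases i
  · exact fun v hv => l1S h v hv
  · exact fun v hv => l2S h v hv
  · exact fun v hv => l3S h v hv

lemma span_top : SS h = ⊤ := by
  rw [Submodule.eq_top_iff']
  intro x
  have hx : x ∈ TT h := top_le_TT h (by trivial)
  have h1 : (1 : UL3D h) ∈ SS h := by
    simpa [mono] using mono_mem h 0 0 0
  simpa using hx 1 h1

end Span

end PBWAux

/-- PBW basis of `U(L³ᴰ)`: the ordered monomials `χ₂^α χ₁^β χ₃^γ` form a linear basis. -/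
theorem UL3D_pbw_basis (h : ℂ) :
    LinearIndependent ℂ (fun p : ℕ × ℕ × ℕ =>
      uχ2 h ^ p.1 * uχ1 h ^ p.2.1 * uχ3 h ^ p.2.2) ∧
    Submodule.span ℂ (Set.range (fun p : ℕ × ℕ × ℕ =>
      uχ2 h ^ p.1 * uχ1 h ^ p.2.1 * uχ3 h ^ p.2.2)) = ⊤ := by
  refine ⟨indep h, ?_⟩
  have hs := span_top h
  rw [SS] at hs
  exact hs
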